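/- A 2-regular graph on n vertices admits an orientation with skew energy n√2 if and only if n is a multiple of 4 and the graph is a disjoint union of n/4 copies of the cycle C₄. -/

import Mathlib

open Matrix BigOperators

/-- The skew energy of a real matrix `S`: the sum of its singular values, i.e. the
square roots of the eigenvalues of `Sᵀ * S` (which equals `Sᴴ * S` over `ℝ`). -/
noncomputable def skewEnergy {α : Type*} [Fintype α] [DecidableEq α]
    (S : Matrix α α ℝ) : ℝ :=
  ∑ i, Real.sqrt ((show (Sᵀ * S).IsHermitian by
    simpa using Matrix.isHermitian_conjTranspose_mul_self S).eigenvalues i)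

/-- `S` is the skew-adjacency matrix of some orientation of the simple graph `G`:
`S` is skew-symmetric with entries in `{0, ±1}` and `|S i j| = 1` iff `ij` is an edge. -/
def IsSkewAdj {α : Type*} (G : SimpleGraph α) (S : Matrix α α ℝ) : Prop :=
  Sᵀ = -S ∧ ∀ i j, (G.Adj i j → (S i j = 1 ∨ S i j = -1)) ∧ (¬ G.Adj i j → S i j = 0)

/-- The disjoint union of `k` copies of the cycle `C₄`. -/
def cycleUnion (k : ℕ) : SimpleGraph (Fin k × ZMod 4) where
  Adj x y := x.1 = y.1 ∧ (x.2 = y.2 + 1 ∨ y.2 = x.2 + 1)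
  symm := ⟨by rintro ⟨a, i⟩ ⟨b, j⟩ ⟨h1, h2⟩; exact ⟨h1.symm, h2.symm⟩⟩
  loopless := ⟨by rintro ⟨a, i⟩ ⟨-, h | h⟩ <;> simp at h <;> exact absurd h (by decide)⟩

/-!
The diagonal of `SᵀS` is the degree sequence, so `tr (SᵀS) = 2n`. For every eigenvalue `λ` of
`SᵀS`, AM-GM gives `√λ ≤ (λ + 2) / (2√2)`, hence `skewEnergy S ≤ n√2`, with equality iff every
eigenvalue is `2`, i.e. `SᵀS = 2I`. Orthogonality of the columns of two neighbours `a, b` of a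
vertex `v` then forces a second common neighbour of `a` and `b`, so every vertex lies on an induced
`C₄`, which by 2-regularity is its whole component. Conversely, one orientation of `C₄` with
`SᵀS = 2I`, repeated on every block, handles all disjoint unions of copies of `C₄`.
-/

open Matrix Kronecker

namespace Matrix.IsHermitian

variable {𝕜 n : Type*} [RCLike 𝕜] [Fintype n] [DecidableEq n] {A : Matrix n n 𝕜}

theorem eigenvalues_eq_const_iff (hA : A.IsHermitian) (c : ℝ) :
    (∀ i, hA.eigenvalues i = c) ↔ A = (c : 𝕜) • 1 := by
  constructor
  · intro h
    rw [hA.spectral_theorem, show (RCLike.ofReal ∘ hA.eigenvalues : n → 𝕜) = fun _ => (c : 𝕜) from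
      funext fun i => by simp [h], ← smul_one_eq_diagonal, map_smul, map_one]
  · rintro rfl i
    have hv := hA.mulVec_eigenvectorBasis i
    have hv0 : ⇑(hA.eigenvectorBasis i) ≠ 0 :=
      (WithLp.ofLp_eq_zero 2).ne.2 (hA.eigenvectorBasis.orthonormal.ne_zero i)
    rw [smul_mulVec, one_mulVec, RCLike.real_smul_eq_coe_smul (K := 𝕜)] at hv
    exact_mod_cast (smul_left_injective 𝕜 hv0 hv).symm

end Matrix.IsHermitian

theorem Real.sum_sqrt_eq_iff {ι : Type*} [Fintype ι] {c : ℝ} (hc : 0 < c) {x : ι → ℝ}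
    (hx : ∀ i, 0 ≤ x i) (hsum : ∑ i, x i = Fintype.card ι * c) :
    ∑ i, √(x i) = Fintype.card ι * √c ↔ ∀ i, x i = c := by
  have amgm (i : ι) : √(x i) ≤ (x i + c) / (2 * √c) := by
    rw [le_div_iff₀ (by positivity)]
    nlinarith [sq_nonneg (√(x i) - √c), Real.mul_self_sqrt (hx i), Real.mul_self_sqrt hc.le]
  have amgm_eq (i : ι) : √(x i) = (x i + c) / (2 * √c) ↔ x i = c := by
    rw [eq_div_iff (by positivity), ← Real.sqrt_inj (hx i) hc.le]
    constructor <;> intro h <;> nlinarith [Real.mul_self_sqrt (hx i), Real.mul_self_sqrt hc.le]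
  have hbound : ∑ i, (x i + c) / (2 * √c) = Fintype.card ι * √c := by
    rw [← Finset.sum_div, Finset.sum_add_distrib, hsum, Finset.sum_const, nsmul_eq_mul,
      Finset.card_univ, div_eq_iff (by positivity)]
    nlinarith [Real.mul_self_sqrt hc.le]
  rw [← hbound, Finset.sum_eq_sum_iff_of_le fun i _ => amgm i]
  simp [amgm_eq]

theorem skewEnergy_eq_iff {α : Type*} [Fintype α] [DecidableEq α] {S : Matrix α α ℝ} {c : ℝ}
    (hc : 0 < c) (hdiag : ∀ i, (Sᵀ * S) i i = c) :
    skewEnergy S = Fintype.card α * √c ↔ Sᵀ * S = c • 1 := by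
  have hpsd : (Sᵀ * S).PosSemidef := by
    simpa using Matrix.posSemidef_conjTranspose_mul_self S
  have htrace : ∑ i, hpsd.isHermitian.eigenvalues i = Fintype.card α * c := by
    have := hpsd.isHermitian.trace_eq_sum_eigenvalues
    simp only [RCLike.ofReal_real_eq_id, id] at this
    simp [← this, Matrix.trace, hdiag]
  unfold skewEnergy
  rw [Real.sum_sqrt_eq_iff hc hpsd.eigenvalues_nonneg htrace,
    hpsd.isHermitian.eigenvalues_eq_const_iff]
  simp

namespace IsSkewAdj

variable {V W : Type*} {G : SimpleGraph V} {S : Matrix V V ℝ}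

theorem transpose_mul_self_apply_self [Fintype V] [DecidableRel G.Adj] (hS : IsSkewAdj G S)
    (i : V) : (Sᵀ * S) i i = G.degree i := by
  have hsq (k : V) : S k i * S k i = if G.Adj i k then 1 else 0 := by
    by_cases hik : G.Adj i k
    · rcases (hS.2 k i).1 hik.symm with h | h <;> simp [hik, h]
    · simp [hik, (hS.2 k i).2 (mt G.adj_symm hik)]
  simp only [mul_apply, transpose_apply, hsq, Finset.sum_boole, ← G.neighborFinset_eq_filter,
    G.card_neighborFinset_eq_degree]

theorem exists_adj_adj_ne [Fintype V] (hS : IsSkewAdj G S) {v a b : V} (h : (Sᵀ * S) a b = 0)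
    (ha : G.Adj v a) (hb : G.Adj v b) : ∃ w ≠ v, G.Adj w a ∧ G.Adj w b := by
  by_contra! hw
  have hsingle : (Sᵀ * S) a b = S v a * S v b := by
    refine Finset.sum_eq_single v (fun w _ hwv => ?_) (by simp)
    by_cases hwa : G.Adj w a
    · simp [(hS.2 w b).2 (hw w hwv hwa)]
    · simp [(hS.2 w a).2 hwa]
  rcases (hS.2 v a).1 ha with h1 | h1 <;> rcases (hS.2 v b).1 hb with h2 | h2 <;>
    simp [hsingle, h1, h2] at h

theorem submatrix {H : SimpleGraph W} {S : Matrix W W ℝ} (hS : IsSkewAdj H S) (e : G ≃g H) :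
    IsSkewAdj G (S.submatrix e e) := by
  refine ⟨by ext i j; simpa using congr_fun₂ hS.1 (e i) (e j), fun i j => ?_⟩
  simpa only [submatrix_apply, ← e.map_adj_iff] using hS.2 (e i) (e j)

end IsSkewAdj

/-- `C₄` on `ZMod 4`, with the adjacency used in `cycleUnion` (Mathlib's `cycleGraph 4` lives on
`Fin 4`). -/
def cycleFour : SimpleGraph (ZMod 4) where
  Adj s t := s = t + 1 ∨ t = s + 1
  symm := ⟨fun _ _ => Or.symm⟩
  loopless := ⟨by decide⟩

instance : DecidableRel cycleFour.Adj := fun _ _ => inferInstanceAs (Decidable (_ ∨ _))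

theorem ZMod.four_cases : ∀ s : ZMod 4, s = 0 ∨ s = 1 ∨ s = 2 ∨ s = 3 := by decide

theorem cycleFour_adj_iff {s t : ZMod 4} : cycleFour.Adj s t ↔ t = s + 1 ∨ t = s - 1 := by
  rw [eq_sub_iff_add_eq, eq_comm (b := s), or_comm]
  rfl

theorem cycleFour_reachable_zero (s : ZMod 4) : cycleFour.Reachable 0 s := by
  have h01 : cycleFour.Adj 0 1 := Or.inr rfl
  have h12 : cycleFour.Adj 1 2 := Or.inr rfl
  have h03 : cycleFour.Adj 0 3 := Or.inl rfl
  rcases ZMod.four_cases s with rfl | rfl | rfl | rfl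
  · rfl
  · exact h01.reachable
  · exact h01.reachable.trans h12.reachable
  · exact h03.reachable

/-- The cyclic orientation `s → s + 1` of `C₄` has `SᵀS ≠ 2I`; reversing the arc `3 → 0`
repairs it. The signs are kept in `ℤ` so that the finite checks below are done by `decide`. -/
def cycleFourSign : ZMod 4 → ZMod 4 → ℤ :=
  ![![0, 1, 0, 1], ![-1, 0, 1, 0], ![0, -1, 0, 1], ![-1, 0, -1, 0]]

theorem cycleFourSign_antisymm : ∀ s t, cycleFourSign t s = -cycleFourSign s t := by decide

theorem cycleFourSign_orthogonal :
    ∀ s t, ∑ r, cycleFourSign r s * cycleFourSign r t = if s = t then 2 else 0 := by decide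

theorem cycleFourSign_eq : ∀ s t,
    (cycleFour.Adj s t → cycleFourSign s t = 1 ∨ cycleFourSign s t = -1) ∧
      (¬ cycleFour.Adj s t → cycleFourSign s t = 0) := by decide

def cycleFourOrientation : Matrix (ZMod 4) (ZMod 4) ℝ := of fun s t => (cycleFourSign s t : ℝ)

theorem cycleFourOrientation_transpose : cycleFourOrientationᵀ = -cycleFourOrientation := by
  ext s t
  simp [cycleFourOrientation, cycleFourSign_antisymm s t]

theorem cycleFourOrientation_transpose_mul_self :
    cycleFourOrientationᵀ * cycleFourOrientation = (2 : ℝ) • 1 := by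
  ext s t
  have h : ∑ r, (cycleFourSign r s : ℝ) * cycleFourSign r t = if s = t then 2 else 0 := by
    exact_mod_cast cycleFourSign_orthogonal s t
  simp [cycleFourOrientation, mul_apply, h, one_apply]

def cycleUnionOrientation (k : ℕ) : Matrix (Fin k × ZMod 4) (Fin k × ZMod 4) ℝ :=
  (1 : Matrix (Fin k) (Fin k) ℝ) ⊗ₖ cycleFourOrientation

theorem isSkewAdj_cycleUnionOrientation (k : ℕ) :
    IsSkewAdj (cycleUnion k) (cycleUnionOrientation k) := by
  refine ⟨?_, fun ⟨i, s⟩ ⟨j, t⟩ => ?_⟩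
  · rw [cycleUnionOrientation, ← kroneckerMap_transpose, transpose_one,
      cycleFourOrientation_transpose]
    ext ⟨i, s⟩ ⟨j, t⟩
    simp [kroneckerMap_apply]
  · obtain ⟨hadj, hnadj⟩ := cycleFourSign_eq s t
    by_cases hij : i = j
    · subst hij
      refine ⟨fun h => ?_, fun h => ?_⟩
      · rcases hadj h.2 with h' | h' <;>
          simp [cycleUnionOrientation, kroneckerMap_apply, cycleFourOrientation, h']
      · simp [cycleUnionOrientation, kroneckerMap_apply, cycleFourOrientation,
          hnadj fun h' => h ⟨rfl, h'⟩]
    · simp [cycleUnion, cycleUnionOrientation, kroneckerMap_apply, hij]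

theorem cycleUnionOrientation_transpose_mul_self (k : ℕ) :
    (cycleUnionOrientation k)ᵀ * cycleUnionOrientation k = (2 : ℝ) • 1 := by
  rw [cycleUnionOrientation, ← kroneckerMap_transpose, transpose_one, ← mul_kronecker_mul,
    one_mul, cycleFourOrientation_transpose_mul_self, kronecker_smul, one_kronecker_one]

namespace SimpleGraph

theorem nonempty_iso_cycleUnion_of_equiv {V C : Type*} {G : SimpleGraph V} [Fintype C]
    (Φ : C × ZMod 4 ≃ V)
    (hadj : ∀ x y, G.Adj (Φ x) (Φ y) ↔ x.1 = y.1 ∧ cycleFour.Adj x.2 y.2) :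
    Nonempty (G ≃g cycleUnion (Fintype.card C)) := by
  let e := ((Fintype.equivFin C).symm.prodCongr (Equiv.refl _)).trans Φ
  refine ⟨(⟨e, fun {x y} => ?_⟩ : cycleUnion _ ≃g G).symm⟩
  simp only [e, Equiv.trans_apply, Equiv.prodCongr_apply, hadj, Prod.map_fst, Prod.map_snd,
    Equiv.apply_eq_iff_eq, Equiv.refl_apply]
  rfl

variable {V : Type*} {G : SimpleGraph V} [Fintype V] [DecidableRel G.Adj]

theorem adj_iff_of_degree_eq_two {v x y : V} (hv : G.degree v = 2) (hx : G.Adj v x)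
    (hy : G.Adj v y) (hxy : x ≠ y) (z : V) : G.Adj v z ↔ z = x ∨ z = y := by
  classical
  have : G.neighborFinset v = {x, y} :=
    (Finset.eq_of_subset_of_card_le (by simp [Finset.insert_subset_iff, hx, hy])
      (by rw [card_neighborFinset_eq_degree, hv, Finset.card_pair hxy])).symm
  rw [← mem_neighborFinset, this, Finset.mem_insert, Finset.mem_singleton]

theorem Embedding.adj_cycleFour_iff (hreg : G.IsRegularOfDegree 2) (f : cycleFour ↪g G)
    (s : ZMod 4) (y : V) : G.Adj (f s) y ↔ y = f (s + 1) ∨ y = f (s - 1) :=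
  adj_iff_of_degree_eq_two (hreg _) (f.map_adj_iff.2 (cycleFour_adj_iff.2 (Or.inl rfl)))
    (f.map_adj_iff.2 (cycleFour_adj_iff.2 (Or.inr rfl)))
    (f.injective.ne (by revert s; decide)) y

theorem Embedding.mem_range_of_reachable (hreg : G.IsRegularOfDegree 2) (f : cycleFour ↪g G)
    {y : V} (h : G.Reachable (f 0) y) : y ∈ Set.range f := by
  suffices ∀ {u : V}, G.Walk u y → u ∈ Set.range f → y ∈ Set.range f from
    this h.some ⟨0, rfl⟩
  clear h
  intro u w
  induction w with
  | nil => exact id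
  | cons hadj _ ih =>
    rintro ⟨s, rfl⟩
    rcases (f.adj_cycleFour_iff hreg s _).1 hadj with hv | hv <;> exact ih ⟨_, hv.symm⟩

theorem exists_cycleFour_embedding (hreg : G.IsRegularOfDegree 2)
    (hsq : ∀ v a b, a ≠ b → G.Adj v a → G.Adj v b → ∃ w ≠ v, G.Adj w a ∧ G.Adj w b) (r : V) :
    ∃ f : cycleFour ↪g G, f 0 = r := by
  classical
  obtain ⟨a, b, hab, hN⟩ :=
    Finset.card_eq_two.1 ((G.card_neighborFinset_eq_degree r).trans (hreg r))
  have ha : G.Adj r a := by simp [← mem_neighborFinset, hN]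
  have hb : G.Adj r b := by simp [← mem_neighborFinset, hN]
  obtain ⟨p, hpr, hpa, hpb⟩ := hsq r a b hab ha hb
  set f : ZMod 4 → V := ![r, a, p, b]
  have hsucc (s : ZMod 4) : G.Adj (f s) (f (s + 1)) := by
    rcases ZMod.four_cases s with rfl | rfl | rfl | rfl
    exacts [ha, hpa.symm, hpb, hb.symm]
  have hne (s : ZMod 4) : f (s + 1) ≠ f (s - 1) := by
    rcases ZMod.four_cases s with rfl | rfl | rfl | rfl
    exacts [hab, hpr, hab.symm, hpr.symm]
  have hnbr (s : ZMod 4) (y : V) : G.Adj (f s) y ↔ y = f (s + 1) ∨ y = f (s - 1) :=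
    adj_iff_of_degree_eq_two (hreg _) (hsucc s) (by simpa using (hsucc (s - 1)).symm) (hne s) y
  have hinj : Function.Injective f := by
    intro s t hst
    rcases ZMod.four_cases s with rfl | rfl | rfl | rfl <;>
      rcases ZMod.four_cases t with rfl | rfl | rfl | rfl <;>
      simp [f, ha.ne, hb.ne, hpa.ne, hpb.ne, hpr, hab, ha.ne', hb.ne', hpa.ne', hpb.ne',
        hpr.symm, hab.symm] at hst ⊢
  refine ⟨⟨⟨f, hinj⟩, fun {s t} => ?_⟩, rfl⟩
  simp only [Function.Embedding.coeFn_mk, hnbr, hinj.eq_iff, cycleFour_adj_iff]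

theorem nonempty_iso_cycleUnion (hreg : G.IsRegularOfDegree 2)
    (hemb : ∀ r, ∃ f : cycleFour ↪g G, f 0 = r) :
    ∃ k, Nonempty (G ≃g cycleUnion k) := by
  classical
  choose F hF using hemb
  have hrep_exists (c : G.ConnectedComponent) : ∃ r, G.connectedComponentMk r = c := c.exists_rep
  choose rep hrep using hrep_exists
  let Φ : G.ConnectedComponent × ZMod 4 → V := fun x => F (rep x.1) x.2
  have hcomp (x) : G.connectedComponentMk (Φ x) = x.1 := by
    have h := (cycleFour_reachable_zero x.2).map (F (rep x.1)).toHom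
    rw [← hrep x.1, ConnectedComponent.eq]
    simpa [hF] using h.symm
  have hΦ_fst (x y : G.ConnectedComponent × ZMod 4) (h : x.1 = y.1) : Φ y = F (rep x.1) y.2 := by
    simp [Φ, h]
  have hadj (x y) : G.Adj (Φ x) (Φ y) ↔ x.1 = y.1 ∧ cycleFour.Adj x.2 y.2 := by
    refine ⟨fun h => ?_, fun ⟨h1, h2⟩ => ?_⟩
    · have h1 : x.1 = y.1 := by
        rw [← hcomp x, ← hcomp y]
        exact ConnectedComponent.connectedComponentMk_eq_of_adj h
      rw [hΦ_fst x y h1, (F _).map_adj_iff] at h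
      exact ⟨h1, h⟩
    · rwa [hΦ_fst x y h1, (F _).map_adj_iff]
  have hinj : Function.Injective Φ := by
    rintro ⟨c, s⟩ ⟨d, t⟩ h
    obtain rfl : c = d := by simpa only [hcomp] using congrArg G.connectedComponentMk h
    simpa using (F (rep c)).injective h
  have hsurj : Function.Surjective Φ := by
    intro v
    obtain ⟨s, hs⟩ := (F (rep (G.connectedComponentMk v))).mem_range_of_reachable hreg (y := v)
      (by rw [hF, ← ConnectedComponent.eq, hrep])
    exact ⟨(_, s), hs⟩
  exact ⟨_, nonempty_iso_cycleUnion_of_equiv (Equiv.ofBijective Φ ⟨hinj, hsurj⟩) hadj⟩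

end SimpleGraph

theorem two_regular_optimum {n : ℕ} (G : SimpleGraph (Fin n))
    [DecidableRel G.Adj] (hreg : G.IsRegularOfDegree 2) :
    (∃ S, IsSkewAdj G S ∧ skewEnergy S = n * Real.sqrt 2) ↔
      ∃ k, n = 4 * k ∧ Nonempty (G ≃g cycleUnion k) := by
  constructor
  · rintro ⟨S, hS, hE⟩
    have hdiag (i : Fin n) : (Sᵀ * S) i i = 2 := by
      rw [hS.transpose_mul_self_apply_self, hreg i, Nat.cast_ofNat]
    have hSS : Sᵀ * S = (2 : ℝ) • 1 := (skewEnergy_eq_iff two_pos hdiag).1 (by simpa using hE)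
    have hsq : ∀ v a b, a ≠ b → G.Adj v a → G.Adj v b → ∃ w ≠ v, G.Adj w a ∧ G.Adj w b :=
      fun _ _ _ hab => hS.exists_adj_adj_ne (by simp [hSS, hab])
    obtain ⟨k, ⟨e⟩⟩ := G.nonempty_iso_cycleUnion hreg (G.exists_cycleFour_embedding hreg hsq)
    exact ⟨k, by simpa [mul_comm] using Fintype.card_congr e.toEquiv, ⟨e⟩⟩
  · rintro ⟨k, -, ⟨e⟩⟩
    set S := (cycleUnionOrientation k).submatrix e e
    have hSS : Sᵀ * S = (2 : ℝ) • 1 := by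
      rw [transpose_submatrix]
      exact (submatrix_mul_equiv _ _ _ e.toEquiv _).trans (by
        rw [cycleUnionOrientation_transpose_mul_self]; ext i j; simp [one_apply])
    refine ⟨S, (isSkewAdj_cycleUnionOrientation k).submatrix e, ?_⟩
    simpa using (skewEnergy_eq_iff two_pos fun i => by rw [hSS]; simp).2 hSS
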